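/- arXiv:1112.5617 — 4 statements merged into one kernel-verified Lean document; each statement's English description precedes it below -/
import Mathlib

section
/- Let B ⊂ ℝ³×ℝ³ be the ball of radius r centered at (w_1, w_2). Then ∫_B |x_1−x_2|^{−2} dx_1 dx_2 ≤ C · r⁶/(|w_1−w_2| + 2r)², for a universal constant C independent of w_1, w_2, r. -/
open MeasureTheory Metric Set
open scoped ENNReal

local notation "E3" => EuclideanSpace ℝ (Fin 3)

lemma ball_lintegral_bound (c : E3) (R : ℝ) (hR : 0 < R) :
    ∫⁻ x in ball c R, ENNReal.ofReal ((dist x c ^ 2)⁻¹) ≤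
      ENNReal.ofReal (8 * R) * volume (ball (0 : E3) 1) := by
  set V : ℝ≥0∞ := volume (ball (0 : E3) 1) with hV
  set A : ℕ → Set E3 := fun n =>
    {x | R * (2:ℝ) ^ (-(n:ℤ) - 1) < dist x c ∧ dist x c ≤ R * (2:ℝ) ^ (-(n:ℤ))} with hA
  have hcover : ball c R ⊆ {c} ∪ ⋃ n, A n := by
    intro x hx
    rcases eq_or_ne x c with h | h
    · exact Or.inl h
    · have hd : 0 < dist x c := dist_pos.2 h
      have hdR : dist x c / R < 1 := (div_lt_one hR).2 (mem_ball.1 hx)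
      obtain ⟨m, hm1, hm2⟩ := exists_mem_Ioc_zpow (div_pos hd hR) (one_lt_two (α := ℝ))
      have hmneg : m + 1 ≤ 0 := by
        by_contra hc
        push_neg at hc
        have : (1:ℝ) ≤ (2:ℝ) ^ m := one_le_zpow₀ one_le_two (by omega)
        linarith [hm1, hdR]
      refine Or.inr (mem_iUnion.2 ⟨(-(m+1)).toNat, ?_, ?_⟩)
      · have : (-((-(m+1)).toNat : ℤ) - 1) = m := by omega
        rw [this]
        calc R * (2:ℝ) ^ m < R * (dist x c / R) := by
              exact mul_lt_mul_of_pos_left hm1 hR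
          _ = dist x c := by field_simp
      · have : (-((-(m+1)).toNat : ℤ)) = m + 1 := by omega
        rw [this]
        calc dist x c = R * (dist x c / R) := by field_simp
          _ ≤ R * (2:ℝ) ^ (m+1) := mul_le_mul_of_nonneg_left hm2 hR.le
  have key : ∀ n : ℕ, ∫⁻ x in A n, ENNReal.ofReal ((dist x c ^ 2)⁻¹) ≤
      ENNReal.ofReal (4 * R) * (2⁻¹ : ℝ≥0∞) ^ n * V := by
    intro n
    have hmeasA : MeasurableSet (A n) := by
      have : A n = (fun x => dist x c) ⁻¹' Ioc (R * (2:ℝ) ^ (-(n:ℤ) - 1)) (R * 2 ^ (-(n:ℤ))) := rfl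
      rw [this]
      exact (measurable_dist.comp (measurable_id.prodMk measurable_const)) measurableSet_Ioc
    have hr1 : (0:ℝ) < R * (2:ℝ) ^ (-(n:ℤ) - 1) := by positivity
    have step1 : ∫⁻ x in A n, ENNReal.ofReal ((dist x c ^ 2)⁻¹) ≤
        ∫⁻ _ in A n, ENNReal.ofReal ((R * (2:ℝ) ^ (-(n:ℤ) - 1)) ^ 2)⁻¹ := by
      refine setLIntegral_mono' hmeasA fun x hx => ?_
      refine ENNReal.ofReal_le_ofReal ?_
      have h1 : R * (2:ℝ) ^ (-(n:ℤ) - 1) ≤ dist x c := hx.1.le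
      have := sq_le_sq' (by linarith) h1
      exact inv_anti₀ (by positivity) (by nlinarith [hx.1])
    have step2 : (∫⁻ _ in A n, ENNReal.ofReal ((R * (2:ℝ) ^ (-(n:ℤ) - 1)) ^ 2)⁻¹)
        = ENNReal.ofReal ((R * (2:ℝ) ^ (-(n:ℤ) - 1)) ^ 2)⁻¹ * volume (A n) := by
      simp [lintegral_const, Measure.restrict_apply MeasurableSet.univ]
    have hsub : A n ⊆ closedBall c (R * (2:ℝ) ^ (-(n:ℤ))) := fun x hx => mem_closedBall.2 hx.2
    have hmeas : volume (A n) ≤ ENNReal.ofReal ((R * (2:ℝ) ^ (-(n:ℤ))) ^ 3) * V := by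
      calc volume (A n) ≤ volume (closedBall c (R * (2:ℝ) ^ (-(n:ℤ)))) := measure_mono hsub
        _ = ENNReal.ofReal ((R * (2:ℝ) ^ (-(n:ℤ))) ^ 3) * V := by
            rw [Measure.addHaar_closedBall _ _ (by positivity)]
            congr 1
            rw [finrank_euclideanSpace_fin]
    calc ∫⁻ x in A n, ENNReal.ofReal ((dist x c ^ 2)⁻¹)
        ≤ ENNReal.ofReal ((R * (2:ℝ) ^ (-(n:ℤ) - 1)) ^ 2)⁻¹ * volume (A n) := step1.trans step2.le
      _ ≤ ENNReal.ofReal ((R * (2:ℝ) ^ (-(n:ℤ) - 1)) ^ 2)⁻¹ *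
            (ENNReal.ofReal ((R * (2:ℝ) ^ (-(n:ℤ))) ^ 3) * V) := by
          exact mul_le_mul_right hmeas _
      _ = (ENNReal.ofReal (((R * (2:ℝ) ^ (-(n:ℤ) - 1)) ^ 2)⁻¹ * (R * (2:ℝ) ^ (-(n:ℤ))) ^ 3)) * V := by
          rw [ENNReal.ofReal_mul (by positivity), mul_assoc]
      _ = ENNReal.ofReal (4 * R) * (2⁻¹ : ℝ≥0∞) ^ n * V := by
          congr 1
          have hR0 : R ≠ 0 := hR.ne'
          set t := (2:ℝ) ^ (-(n:ℤ)) with ht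
          have ht0 : (0:ℝ) < t := by positivity
          have htm : (2:ℝ) ^ (-(n:ℤ) - 1) = t / 2 := by
            rw [ht, zpow_sub₀ (two_ne_zero), zpow_one]
          have h1 : ((2:ℝ)⁻¹) ^ n = t := by
            rw [ht, ← zpow_natCast ((2:ℝ)⁻¹) n, inv_zpow, ← zpow_neg]
          have harith : ((R * (2:ℝ) ^ (-(n:ℤ) - 1)) ^ 2)⁻¹ * (R * (2:ℝ) ^ (-(n:ℤ))) ^ 3
              = (4 * R) * ((2:ℝ)⁻¹) ^ n := by
            rw [htm, h1, ← ht]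
            field_simp
            ring
          rw [harith, ENNReal.ofReal_mul (by positivity),
            ENNReal.ofReal_pow (by norm_num : (0:ℝ) ≤ 2⁻¹)]
          congr 2
          rw [ENNReal.ofReal_inv_of_pos two_pos]
          norm_num
  calc ∫⁻ x in ball c R, ENNReal.ofReal ((dist x c ^ 2)⁻¹)
      ≤ ∫⁻ x in {c} ∪ ⋃ n, A n, ENNReal.ofReal ((dist x c ^ 2)⁻¹) :=
        lintegral_mono_set hcover
    _ ≤ (∫⁻ x in ({c} : Set E3), ENNReal.ofReal ((dist x c ^ 2)⁻¹)) +
        ∫⁻ x in ⋃ n, A n, ENNReal.ofReal ((dist x c ^ 2)⁻¹) := lintegral_union_le _ _ _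
    _ ≤ 0 + ∑' n, ∫⁻ x in A n, ENNReal.ofReal ((dist x c ^ 2)⁻¹) := by
        gcongr
        · exact le_of_eq (setLIntegral_measure_zero _ _ (measure_singleton c))
        · exact lintegral_iUnion_le _ _
    _ ≤ 0 + ∑' n : ℕ, ENNReal.ofReal (4 * R) * (2⁻¹ : ℝ≥0∞) ^ n * V := by
        gcongr with n
        exact key n
    _ = ENNReal.ofReal (8 * R) * V := by
        rw [zero_add, ENNReal.tsum_mul_right, ENNReal.tsum_mul_left, ENNReal.tsum_geometric,
          ENNReal.one_sub_inv_two, inv_inv]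
        rw [show (8:ℝ) * R = 4 * R * 2 by ring, ENNReal.ofReal_mul (by positivity),
          show (4:ℝ)*R*2 = 4*(R*2) by ring,
          ENNReal.ofReal_mul (by norm_num : (0:ℝ) ≤ 4), ENNReal.ofReal_mul hR.le,
          ENNReal.ofReal_ofNat, ENNReal.ofReal_ofNat]
        ring


/-- `∫_B |x₁−x₂|⁻² dx₁ dx₂ ≤ C r⁶/(|w₁−w₂|+2r)²` for the Euclidean ball
`B ⊂ ℝ³ × ℝ³` of radius `r` centered at `(w₁, w₂)`. -/
theorem stmt7 :
    ∃ C : ℝ, 0 < C ∧ ∀ (w₁ w₂ : EuclideanSpace ℝ (Fin 3)) (r : ℝ), 0 < r →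
      (∫ p in {p : EuclideanSpace ℝ (Fin 3) × EuclideanSpace ℝ (Fin 3) |
            dist p.1 w₁ ^ 2 + dist p.2 w₂ ^ 2 < r ^ 2},
          (dist p.1 p.2 ^ 2)⁻¹) ≤
        C * r ^ 6 / (dist w₁ w₂ + 2 * r) ^ 2 := by
  set V : ℝ≥0∞ := volume (ball (0 : E3) 1) with hV
  have hVpos : 0 < V := measure_ball_pos _ _ one_pos
  have hVlt : V ≠ ⊤ := measure_ball_lt_top.ne
  set Vt : ℝ := V.toReal with hVt
  have hVtpos : 0 < Vt := ENNReal.toReal_pos hVpos.ne' hVlt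
  have hVeq : ENNReal.ofReal Vt = V := ENNReal.ofReal_toReal hVlt
  refine ⟨1728 * Vt ^ 2, by positivity, fun w₁ w₂ r hr => ?_⟩
  set d : ℝ := dist w₁ w₂ with hd
  have hd0 : 0 ≤ d := dist_nonneg
  have hden : 0 < d + 2 * r := by linarith
  set B : Set (E3 × E3) := {p | dist p.1 w₁ ^ 2 + dist p.2 w₂ ^ 2 < r ^ 2} with hB
  have hgm : Measurable fun p : E3 × E3 => (dist p.1 p.2 ^ 2)⁻¹ :=
    (((continuous_fst.dist continuous_snd).pow 2).measurable).inv
  have hBsub : B ⊆ ball w₁ r ×ˢ ball w₂ r := by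
    intro p hp
    simp only [hB, Set.mem_setOf_eq] at hp
    constructor
    · exact mem_ball.2 (by nlinarith [(dist_nonneg : (0:ℝ) ≤ dist p.1 w₁),
        (dist_nonneg : (0:ℝ) ≤ dist p.2 w₂), sq_nonneg (dist p.2 w₂)])
    · exact mem_ball.2 (by nlinarith [(dist_nonneg : (0:ℝ) ≤ dist p.1 w₁),
        (dist_nonneg : (0:ℝ) ≤ dist p.2 w₂), sq_nonneg (dist p.1 w₁)])
  have hint : (∫ p in B, (dist p.1 p.2 ^ 2)⁻¹) =
      (∫⁻ p in B, ENNReal.ofReal ((dist p.1 p.2 ^ 2)⁻¹)).toReal :=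
    integral_eq_lintegral_of_nonneg_ae
      (Filter.Eventually.of_forall fun p => by positivity) hgm.aestronglyMeasurable
  rw [hint]
  refine ENNReal.toReal_le_of_le_ofReal (by positivity) ?_
  rcases le_or_gt (4 * r) d with hcase | hcase
  · -- far case
    have hpt : ∀ p ∈ B, ENNReal.ofReal ((dist p.1 p.2 ^ 2)⁻¹) ≤
        ENNReal.ofReal (9 / (d + 2 * r) ^ 2) := by
      intro p hp
      have h1 : dist p.1 w₁ < r := mem_ball.1 (hBsub hp).1
      have h2 : dist p.2 w₂ < r := mem_ball.1 (hBsub hp).2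
      have htri : d ≤ dist w₁ p.1 + dist p.1 p.2 + dist p.2 w₂ := dist_triangle4 w₁ p.1 p.2 w₂
      rw [dist_comm w₁ p.1] at htri
      have hlow : (d + 2 * r) / 3 ≤ dist p.1 p.2 := by linarith
      refine ENNReal.ofReal_le_ofReal ?_
      have hsq : ((d + 2 * r) / 3) ^ 2 ≤ dist p.1 p.2 ^ 2 := by
        nlinarith [(dist_nonneg : (0:ℝ) ≤ dist p.1 p.2)]
      calc (dist p.1 p.2 ^ 2)⁻¹ ≤ (((d + 2 * r) / 3) ^ 2)⁻¹ :=
            inv_anti₀ (by positivity) hsq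
        _ = 9 / (d + 2 * r) ^ 2 := by field_simp; ring
    have hBm : MeasurableSet B := by
      have : B = (fun p : E3 × E3 => dist p.1 w₁ ^ 2 + dist p.2 w₂ ^ 2) ⁻¹' Iio (r ^ 2) := rfl
      rw [this]
      exact (((continuous_fst.dist continuous_const).pow 2).add
        ((continuous_snd.dist continuous_const).pow 2)).measurable measurableSet_Iio
    have hvolB : volume B ≤ ENNReal.ofReal (r ^ 3) * V * (ENNReal.ofReal (r ^ 3) * V) := by
      calc volume B ≤ volume (ball w₁ r ×ˢ ball w₂ r) := measure_mono hBsub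
        _ = volume (ball w₁ r) * volume (ball w₂ r) := by
            rw [MeasureTheory.Measure.volume_eq_prod, Measure.prod_prod]
        _ = ENNReal.ofReal (r ^ 3) * V * (ENNReal.ofReal (r ^ 3) * V) := by
            rw [Measure.addHaar_ball _ _ hr.le, Measure.addHaar_ball _ _ hr.le,
              finrank_euclideanSpace_fin]
    calc ∫⁻ p in B, ENNReal.ofReal ((dist p.1 p.2 ^ 2)⁻¹)
        ≤ ∫⁻ _ in B, ENNReal.ofReal (9 / (d + 2 * r) ^ 2) := setLIntegral_mono' hBm hpt
      _ = ENNReal.ofReal (9 / (d + 2 * r) ^ 2) * volume B := by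
          simp [lintegral_const, Measure.restrict_apply MeasurableSet.univ]
      _ ≤ ENNReal.ofReal (9 / (d + 2 * r) ^ 2) *
            (ENNReal.ofReal (r ^ 3) * V * (ENNReal.ofReal (r ^ 3) * V)) :=
          mul_le_mul_right hvolB _
      _ = ENNReal.ofReal (9 / (d + 2 * r) ^ 2 * (r ^ 3 * Vt * (r ^ 3 * Vt))) := by
          rw [← hVeq, ← ENNReal.ofReal_mul (by positivity), ← ENNReal.ofReal_mul (by positivity),
            ← ENNReal.ofReal_mul (by positivity)]
      _ ≤ ENNReal.ofReal (1728 * Vt ^ 2 * r ^ 6 / (d + 2 * r) ^ 2) := by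
          refine ENNReal.ofReal_le_ofReal ?_
          rw [div_mul_eq_mul_div, div_le_div_iff₀ (by positivity) (by positivity)]
          nlinarith [sq_nonneg (d + 2 * r), pow_pos hr 6]
  · -- near case
    have hL : (∫⁻ p in B, ENNReal.ofReal ((dist p.1 p.2 ^ 2)⁻¹)) ≤
        ENNReal.ofReal (48 * r) * V * (ENNReal.ofReal (r ^ 3) * V) := by
      calc ∫⁻ p in B, ENNReal.ofReal ((dist p.1 p.2 ^ 2)⁻¹)
          ≤ ∫⁻ p in ball w₁ r ×ˢ ball w₂ r, ENNReal.ofReal ((dist p.1 p.2 ^ 2)⁻¹) :=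
            lintegral_mono_set hBsub
        _ = ∫⁻ x in ball w₁ r, ∫⁻ y in ball w₂ r, ENNReal.ofReal ((dist x y ^ 2)⁻¹) := by
            rw [MeasureTheory.Measure.volume_eq_prod, ← Measure.prod_restrict,
              lintegral_prod _ (hgm.ennreal_ofReal.aemeasurable)]
        _ ≤ ∫⁻ _ in ball w₁ r, ENNReal.ofReal (48 * r) * V := by
            refine setLIntegral_mono' measurableSet_ball fun x hx => ?_
            have hsub2 : ball w₂ r ⊆ ball x (6 * r) := by
              intro y hy
              have h1 : dist x w₁ < r := mem_ball.1 hx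
              have h2 : dist y w₂ < r := mem_ball.1 hy
              have := dist_triangle4 y w₂ w₁ x
              rw [mem_ball]
              rw [dist_comm w₂ w₁] at this
              calc dist y x ≤ dist y w₂ + d + dist w₁ x := this
                _ < 6 * r := by rw [dist_comm w₁ x]; linarith
            calc ∫⁻ y in ball w₂ r, ENNReal.ofReal ((dist x y ^ 2)⁻¹)
                ≤ ∫⁻ y in ball x (6 * r), ENNReal.ofReal ((dist x y ^ 2)⁻¹) :=
                  lintegral_mono_set hsub2
              _ = ∫⁻ y in ball x (6 * r), ENNReal.ofReal ((dist y x ^ 2)⁻¹) := by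
                  simp_rw [dist_comm x]
              _ ≤ ENNReal.ofReal (8 * (6 * r)) * V := ball_lintegral_bound x (6 * r) (by positivity)
              _ = ENNReal.ofReal (48 * r) * V := by
                  rw [show (8:ℝ) * (6 * r) = 48 * r by ring]
        _ = ENNReal.ofReal (48 * r) * V * (ENNReal.ofReal (r ^ 3) * V) := by
            rw [lintegral_const, Measure.restrict_apply MeasurableSet.univ, Set.univ_inter,
              Measure.addHaar_ball _ _ hr.le, finrank_euclideanSpace_fin, mul_assoc]
    refine hL.trans ?_
    have : ENNReal.ofReal (48 * r) * V * (ENNReal.ofReal (r ^ 3) * V)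
        = ENNReal.ofReal (48 * r * Vt * (r ^ 3 * Vt)) := by
      rw [← hVeq, ← ENNReal.ofReal_mul (by positivity), ← ENNReal.ofReal_mul (by positivity),
        ← ENNReal.ofReal_mul (by positivity)]
    rw [this]
    refine ENNReal.ofReal_le_ofReal ?_
    rw [le_div_iff₀ (by positivity)]
    have hsq : (d + 2 * r) ^ 2 ≤ 36 * r ^ 2 := by nlinarith
    have hkey := mul_le_mul_of_nonneg_left hsq
      (by positivity : (0:ℝ) ≤ 48 * r ^ 4 * Vt ^ 2)
    nlinarith [hkey]
end

section
/- Fix w ∈ ℝ³, r > 0, and a, b ∈ ℝ³. Then ∫_{B_r(w)} 1/(|x−a|·|x−b|) dx ≤ C · r³ / ((|w−a|+2r)(|w−b|+2r)) for a universal constant C. -/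
/-!
By the weighted AM–GM inequality `1/(st) ≤ (τ/s² + 1/(τt²))/2` with
`τ = (|w-a|+2r)/(|w-b|+2r)`, it suffices to prove the one-centre estimate
`∫_{B_r(w)} |x-c|^{-k} ≤ C r^d / (|w-c|+2r)^k` for `k < d`. If `|w-c| ≤ 4r`, then
`B_r(w) ⊆ B_{5r}(c)` and polar coordinates give `∫_{B_R(c)} |x-c|^{-k} = d/(d-k) |B_1| R^{d-k}`;
otherwise `|x-c| ≥ (|w-c|+2r)/2` on `B_r(w)` and the integrand is bounded by a constant.
-/

open MeasureTheory Metric Set Module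

lemma preimage_sub_right_ball {G : Type*} [SeminormedAddCommGroup G] (c : G) (R : ℝ) :
    (· - c) ⁻¹' ball (0 : G) R = ball c R := by
  ext x
  simp [dist_eq_norm]

lemma inv_mul_le_weighted_inv_sq {t : ℝ} (ht : 0 < t) (u v : ℝ) :
    (u * v)⁻¹ ≤ (t * (u ^ 2)⁻¹ + t⁻¹ * (v ^ 2)⁻¹) / 2 := by
  rw [mul_inv, ← inv_pow, ← inv_pow]
  have hsq : t * u⁻¹ ^ 2 + t⁻¹ * v⁻¹ ^ 2 - 2 * (u⁻¹ * v⁻¹) = t⁻¹ * (t * u⁻¹ - v⁻¹) ^ 2 := by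
    field_simp
    ring
  linarith [show 0 ≤ t⁻¹ * (t * u⁻¹ - v⁻¹) ^ 2 by positivity]

variable {E : Type*} [NormedAddCommGroup E] [NormedSpace ℝ E] [FiniteDimensional ℝ E]
  [MeasurableSpace E] [BorelSpace E] (μ : Measure E) [μ.IsAddHaarMeasure]

lemma integrableOn_ball_inv_norm_pow {k : ℕ} (hk : k < finrank ℝ E) (R : ℝ) :
    IntegrableOn (fun x : E => (‖x‖ ^ k)⁻¹) (ball 0 R) μ := by
  have : Nontrivial E := Module.nontrivial_of_finrank_pos (R := ℝ) (by omega)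
  rw [integrableOn_fun_norm_addHaar μ (f := fun t => (t ^ k)⁻¹)]
  refine IntegrableOn.congr_fun ((continuous_pow (finrank ℝ E - 1 - k)).integrableOn_Icc.mono_set
    Ioo_subset_Icc_self) (fun y hy => ?_) measurableSet_Ioo
  rw [smul_eq_mul, ← pow_sub₀ y hy.1.ne' (by omega)]

lemma integral_ball_inv_norm_pow {k : ℕ} (hk : k < finrank ℝ E) {R : ℝ} (hR : 0 ≤ R) :
    ∫ x in ball 0 R, (‖x‖ ^ k)⁻¹ ∂μ =
      finrank ℝ E / (finrank ℝ E - k) * μ.real (ball 0 1) * R ^ (finrank ℝ E - k) := by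
  have : Nontrivial E := Module.nontrivial_of_finrank_pos (R := ℝ) (by omega)
  set d := finrank ℝ E
  have hball : ∀ x : E, (ball 0 R).indicator (fun x : E => (‖x‖ ^ k)⁻¹) x =
      (Iio R).indicator (fun t : ℝ => (t ^ k)⁻¹) ‖x‖ := fun x => by
    simp [indicator]
  have hradial : ∀ y : ℝ, y ^ (d - 1) • (Iio R).indicator (fun t : ℝ => (t ^ k)⁻¹) y =
      (Iio R).indicator (fun t : ℝ => t ^ (d - 1) * (t ^ k)⁻¹) y := fun y => by
    by_cases hy : y < R <;> simp [indicator, hy]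
  rw [← integral_indicator measurableSet_ball, funext hball, integral_fun_norm_addHaar,
    funext hradial, setIntegral_indicator measurableSet_Iio, Ioi_inter_Iio,
    setIntegral_congr_fun measurableSet_Ioo
      (fun y hy => (pow_sub₀ y hy.1.ne' (show k ≤ d - 1 by omega)).symm),
    ← integral_Ioc_eq_integral_Ioo, ← intervalIntegral.integral_of_le hR, integral_pow]
  have hd : ((d - 1 - k : ℕ) : ℝ) + 1 = d - k := by
    rw [Nat.cast_sub (by omega), Nat.cast_sub (by omega)]; ring
  have hdk : d - 1 - k + 1 = d - k := by omega
  rw [hd, hdk, nsmul_eq_mul, smul_eq_mul, zero_pow (by omega), sub_zero]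
  ring

lemma integrableOn_ball_inv_dist_pow {k : ℕ} (hk : k < finrank ℝ E) (c w : E) (R : ℝ) :
    IntegrableOn (fun x : E => (dist x c ^ k)⁻¹) (ball w R) μ := by
  refine IntegrableOn.mono_set ?_ (ball_subset_ball' le_rfl : ball w R ⊆ ball c (R + dist w c))
  rw [← preimage_sub_right_ball c]
  simpa [Function.comp_def, dist_eq_norm] using
    ((measurePreserving_sub_right μ c).integrableOn_comp_preimage
      (Homeomorph.subRight c).measurableEmbedding).2 (integrableOn_ball_inv_norm_pow μ hk _)

lemma integral_ball_inv_dist_pow {k : ℕ} (hk : k < finrank ℝ E) (c : E) {R : ℝ} (hR : 0 ≤ R) :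
    ∫ x in ball c R, (dist x c ^ k)⁻¹ ∂μ =
      finrank ℝ E / (finrank ℝ E - k) * μ.real (ball 0 1) * R ^ (finrank ℝ E - k) := by
  rw [← integral_ball_inv_norm_pow μ hk hR, ← preimage_sub_right_ball c R]
  simp only [dist_eq_norm]
  exact (measurePreserving_sub_right μ c).setIntegral_preimage_emb
    (Homeomorph.subRight c).measurableEmbedding (fun y => (‖y‖ ^ k)⁻¹) _

lemma addHaar_real_ball_of_pos (w : E) {r : ℝ} (hr : 0 < r) :
    μ.real (ball w r) = r ^ finrank ℝ E * μ.real (ball 0 1) := by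
  rw [measureReal_def, Measure.addHaar_ball_of_pos μ w hr, ENNReal.toReal_mul,
    ENNReal.toReal_ofReal (by positivity), measureReal_def]

theorem exists_integral_ball_inv_dist_pow_le {k : ℕ} (hk : k < finrank ℝ E) :
    ∃ C > 0, ∀ (w c : E) (r : ℝ), 0 < r →
      ∫ x in ball w r, (dist x c ^ k)⁻¹ ∂μ ≤ C * r ^ finrank ℝ E / (dist w c + 2 * r) ^ k := by
  set d := finrank ℝ E
  set V := μ.real (ball 0 1)
  set A := d / (d - k) * V
  have hV : 0 < V := ENNReal.toReal_pos (measure_ball_pos μ 0 one_pos).ne' measure_ball_lt_top.ne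
  have hdk : (0 : ℝ) < d - k := sub_pos.2 (by exact_mod_cast hk)
  have hA : 0 ≤ A := by positivity
  refine ⟨6 ^ d * (A + V), by positivity, fun w c r hr => ?_⟩
  have hD : 0 < dist w c + 2 * r := by positivity
  rw [le_div_iff₀ (pow_pos hD k)]
  rcases le_total (dist w c) (4 * r) with hnear | hfar
  · have hint : ∫ x in ball w r, (dist x c ^ k)⁻¹ ∂μ ≤ A * (r + dist w c) ^ (d - k) := by
      rw [← integral_ball_inv_dist_pow μ hk c (by positivity)]
      exact setIntegral_mono_set (integrableOn_ball_inv_dist_pow μ hk c c _)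
        (.of_forall fun x => by positivity) (ball_subset_ball' le_rfl).eventuallyLE
    calc (∫ x in ball w r, (dist x c ^ k)⁻¹ ∂μ) * (dist w c + 2 * r) ^ k
        ≤ A * (6 * r) ^ (d - k) * (6 * r) ^ k := by
          gcongr
          · exact hint.trans (by gcongr; linarith)
          · linarith
      _ = 6 ^ d * A * r ^ d := by rw [mul_assoc, pow_sub_mul_pow _ hk.le, mul_pow]; ring
      _ ≤ 6 ^ d * (A + V) * r ^ d := by gcongr; linarith
  · have hpt : ∀ x ∈ ball w r, (dist x c ^ k)⁻¹ ≤ (((dist w c + 2 * r) / 2) ^ k)⁻¹ := by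
      intro x hx
      rw [mem_ball] at hx
      have : (dist w c + 2 * r) / 2 ≤ dist x c := by linarith [dist_triangle_left w c x]
      gcongr
    have hint : ∫ x in ball w r, (dist x c ^ k)⁻¹ ∂μ ≤
        r ^ d * V * (((dist w c + 2 * r) / 2) ^ k)⁻¹ := by
      rw [← addHaar_real_ball_of_pos μ w hr, ← smul_eq_mul, ← setIntegral_const]
      exact integral_mono_of_nonneg (.of_forall fun x => by positivity)
        (integrableOn_const measure_ball_lt_top.ne) ((ae_restrict_iff' measurableSet_ball).2
          (.of_forall hpt))
    have h2d : (2 : ℝ) ^ k ≤ 6 ^ d :=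
      (pow_le_pow_right₀ one_le_two hk.le).trans (pow_le_pow_left₀ zero_le_two (by norm_num) d)
    calc (∫ x in ball w r, (dist x c ^ k)⁻¹ ∂μ) * (dist w c + 2 * r) ^ k
        ≤ r ^ d * V * (((dist w c + 2 * r) / 2) ^ k)⁻¹ * (dist w c + 2 * r) ^ k := by gcongr
      _ = 2 ^ k * V * r ^ d := by rw [div_pow]; field_simp
      _ ≤ 6 ^ d * (A + V) * r ^ d := by gcongr; linarith

theorem exists_integral_ball_inv_dist_mul_dist_le (hd : 2 < finrank ℝ E) :
    ∃ C > 0, ∀ (w a b : E) (r : ℝ), 0 < r →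
      ∫ x in ball w r, (dist x a * dist x b)⁻¹ ∂μ ≤
        C * r ^ finrank ℝ E / ((dist w a + 2 * r) * (dist w b + 2 * r)) := by
  obtain ⟨C, hC, hbound⟩ := exists_integral_ball_inv_dist_pow_le μ hd
  refine ⟨C, hC, fun w a b r hr => ?_⟩
  set Da := dist w a + 2 * r
  set Db := dist w b + 2 * r
  have hDa : 0 < Da := by positivity
  have hDb : 0 < Db := by positivity
  set t := Da / Db
  have ht : 0 < t := by positivity
  have hIa := integrableOn_ball_inv_dist_pow μ hd a w r
  have hIb := integrableOn_ball_inv_dist_pow μ hd b w r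
  calc ∫ x in ball w r, (dist x a * dist x b)⁻¹ ∂μ
      ≤ ∫ x in ball w r, (t * (dist x a ^ 2)⁻¹ + t⁻¹ * (dist x b ^ 2)⁻¹) / 2 ∂μ :=
        integral_mono_of_nonneg (.of_forall fun x => by positivity)
          (((hIa.const_mul t).add (hIb.const_mul t⁻¹)).div_const 2)
          (.of_forall fun x => inv_mul_le_weighted_inv_sq ht _ _)
    _ = (t * ∫ x in ball w r, (dist x a ^ 2)⁻¹ ∂μ +
          t⁻¹ * ∫ x in ball w r, (dist x b ^ 2)⁻¹ ∂μ) / 2 := by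
        rw [integral_div, integral_add (hIa.const_mul t) (hIb.const_mul t⁻¹), integral_const_mul,
          integral_const_mul]
    _ ≤ (t * (C * r ^ finrank ℝ E / Da ^ 2) + t⁻¹ * (C * r ^ finrank ℝ E / Db ^ 2)) / 2 := by
        gcongr
        exacts [hbound w a r hr, hbound w b r hr]
    _ = C * r ^ finrank ℝ E / (Da * Db) := by
        simp only [t]
        field_simp
        ring

/-- `∫_{B_r(w)} (|x−a| |x−b|)⁻¹ dx ≤ C r³ / ((|w−a|+2r)(|w−b|+2r))` in `ℝ³`. -/
theorem stmt8 :
    ∃ C : ℝ, 0 < C ∧ ∀ (w a b : EuclideanSpace ℝ (Fin 3)) (r : ℝ), 0 < r →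
      (∫ x in ball w r, (dist x a * dist x b)⁻¹) ≤
        C * r ^ 3 / ((dist w a + 2 * r) * (dist w b + 2 * r)) := by
  have hd : finrank ℝ (EuclideanSpace ℝ (Fin 3)) = 3 := finrank_euclideanSpace_fin
  obtain ⟨C, hC, hbound⟩ :=
    exists_integral_ball_inv_dist_mul_dist_le (volume : Measure (EuclideanSpace ℝ (Fin 3)))
      (by omega)
  refine ⟨C, hC, fun w a b r hr => ?_⟩
  simpa only [hd] using hbound w a b r hr
end

section
/- Let ρ: ℝ³ → ℝ≥0 be of the form ρ = Σ_{j=1}^m n_j ρ_j with n_j > 0 and each √ρ_j ∈ H¹(ℝ³). Then √ρ ∈ H¹(ℝ³) and ∫_{ℝ³} |∇√ρ|² dx ≤ Σ_{j=1}^m n_j ∫_{ℝ³} |∇√ρ_j|² dx. (Convexity of ρ ↦ ∫|∇√ρ|² under convex combinations / superadditivity of the Fisher information.) -/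
/-!
Write `g_j = √ρ_j`, so that `√ρ = √(∑ c_j g_j²)`. Where `ρ(x) > 0` the chain rule gives
`∇√ρ = (∑ c_j g_j ∇g_j) / √ρ`, and the weighted Cauchy–Schwarz inequality bounds the numerator by
`√ρ · (∑ c_j |∇g_j|²)^{1/2}`; where `ρ(x) = 0`, `√ρ` has a minimum and its gradient vanishes. Hence
`|∇√ρ|² ≤ ∑ c_j |∇√ρ_j|²` pointwise, and integrating gives both the `L²` bound and the inequality.
-/

open MeasureTheory Finset

section CauchySchwarz

variable {ι E : Type*} [Fintype ι] [SeminormedAddCommGroup E] [NormedSpace ℝ E]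

theorem norm_sum_mul_smul_le_sqrt_mul_sqrt {c a : ι → ℝ} (hc : ∀ i, 0 ≤ c i) (v : ι → E) :
    ‖∑ i, (c i * a i) • v i‖ ≤ √(∑ i, c i * a i ^ 2) * √(∑ i, c i * ‖v i‖ ^ 2) :=
  calc ‖∑ i, (c i * a i) • v i‖ ≤ ∑ i, ‖(c i * a i) • v i‖ := norm_sum_le _ _
    _ = ∑ i, √(c i * a i ^ 2) * √(c i * ‖v i‖ ^ 2) := by
      refine Finset.sum_congr rfl fun i _ => ?_
      rw [norm_smul, Real.norm_eq_abs, ← Real.sqrt_mul (mul_nonneg (hc i) (sq_nonneg _)),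
        show c i * a i ^ 2 * (c i * ‖v i‖ ^ 2) = (c i * a i * ‖v i‖) ^ 2 by ring,
        Real.sqrt_sq_eq_abs]
      simp only [abs_mul, abs_norm]
    _ ≤ √(∑ i, c i * a i ^ 2) * √(∑ i, c i * ‖v i‖ ^ 2) :=
      Real.sum_sqrt_mul_sqrt_le _ (fun i => mul_nonneg (hc i) (sq_nonneg _))
        fun i => mul_nonneg (hc i) (sq_nonneg _)

end CauchySchwarz

section Gradient

variable {ι E : Type*} [Fintype ι] [NormedAddCommGroup E] [NormedSpace ℝ E]
  {g : ι → E → ℝ} {c : ι → ℝ} {x : E}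

theorem hasFDerivAt_sqrt_sum_mul_sq (hg : ∀ i, DifferentiableAt ℝ (g i) x)
    (hx : ∑ i, c i * g i x ^ 2 ≠ 0) :
    HasFDerivAt (fun y => √(∑ i, c i * g i y ^ 2))
      ((√(∑ i, c i * g i x ^ 2))⁻¹ • ∑ i, (c i * g i x) • fderiv ℝ (g i) x) x := by
  have hS : HasFDerivAt (fun y => ∑ i, c i * g i y ^ 2)
      (∑ i, c i • (((2 : ℕ) • g i x ^ (2 - 1)) • fderiv ℝ (g i) x)) x :=
    HasFDerivAt.fun_sum fun i _ => ((hg i).hasFDerivAt.pow 2).const_mul (c i)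
  convert hS.sqrt hx using 1
  rw [Finset.smul_sum, Finset.smul_sum]
  refine Finset.sum_congr rfl fun i _ => ?_
  module

theorem sq_norm_fderiv_sqrt_sum_mul_sq_le (hc : ∀ i, 0 ≤ c i)
    (hg : ∀ i, DifferentiableAt ℝ (g i) x) :
    ‖fderiv ℝ (fun y => √(∑ i, c i * g i y ^ 2)) x‖ ^ 2 ≤
      ∑ i, c i * ‖fderiv ℝ (g i) x‖ ^ 2 := by
  have hB : 0 ≤ ∑ i, c i * ‖fderiv ℝ (g i) x‖ ^ 2 :=
    Finset.sum_nonneg fun i _ => mul_nonneg (hc i) (sq_nonneg _)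
  rcases (Finset.sum_nonneg fun i _ => mul_nonneg (hc i) (sq_nonneg (g i x))).eq_or_lt
    with hS | hS
  · have hmin : IsLocalMin (fun y => √(∑ i, c i * g i y ^ 2)) x :=
      Filter.Eventually.of_forall fun y => by
        dsimp only; rw [← hS, Real.sqrt_zero]; positivity
    simpa [hmin.fderiv_eq_zero] using hB
  · rw [(hasFDerivAt_sqrt_sum_mul_sq hg hS.ne').fderiv, norm_smul, norm_inv,
      Real.norm_of_nonneg (Real.sqrt_nonneg _)]
    calc ((√(∑ i, c i * g i x ^ 2))⁻¹ * ‖∑ i, (c i * g i x) • fderiv ℝ (g i) x‖) ^ 2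
        ≤ ((√(∑ i, c i * g i x ^ 2))⁻¹ *
            (√(∑ i, c i * g i x ^ 2) * √(∑ i, c i * ‖fderiv ℝ (g i) x‖ ^ 2))) ^ 2 := by
          gcongr
          exact norm_sum_mul_smul_le_sqrt_mul_sqrt hc _
      _ = ∑ i, c i * ‖fderiv ℝ (g i) x‖ ^ 2 := by
          rw [inv_mul_cancel_left₀ (Real.sqrt_pos.2 hS).ne', Real.sq_sqrt hB]

end Gradient

namespace MeasureTheory

variable {α ι E F : Type*} [Fintype ι] [MeasurableSpace α] {μ : Measure α}
  [NormedAddCommGroup E] [NormedAddCommGroup F] {f : α → E} {g : ι → α → F} {c : ι → ℝ}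

theorem integrable_sum_mul_sq_norm (hg : ∀ i, MemLp (g i) 2 μ) :
    Integrable (fun x => ∑ i, c i * ‖g i x‖ ^ 2) μ :=
  integrable_finsetSum _ fun i _ => ((hg i).integrable_norm_pow two_ne_zero).const_mul _

theorem MemLp.of_sq_norm_le_sum (hf : AEStronglyMeasurable f μ) (hg : ∀ i, MemLp (g i) 2 μ)
    (hfg : ∀ᵐ x ∂μ, ‖f x‖ ^ 2 ≤ ∑ i, c i * ‖g i x‖ ^ 2) : MemLp f 2 μ :=
  (memLp_two_iff_integrable_sq_norm hf).2 <|
    (integrable_sum_mul_sq_norm hg).mono' (hf.norm.pow 2) <| hfg.mono fun x hx => by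
      rwa [Real.norm_of_nonneg (sq_nonneg _)]

theorem integral_sq_norm_le_sum (hg : ∀ i, MemLp (g i) 2 μ)
    (hfg : ∀ᵐ x ∂μ, ‖f x‖ ^ 2 ≤ ∑ i, c i * ‖g i x‖ ^ 2) :
    ∫ x, ‖f x‖ ^ 2 ∂μ ≤ ∑ i, c i * ∫ x, ‖g i x‖ ^ 2 ∂μ :=
  calc ∫ x, ‖f x‖ ^ 2 ∂μ ≤ ∫ x, ∑ i, c i * ‖g i x‖ ^ 2 ∂μ :=
        integral_mono_of_nonneg (.of_forall fun _ => sq_nonneg _)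
          (integrable_sum_mul_sq_norm hg) hfg
    _ = ∑ i, c i * ∫ x, ‖g i x‖ ^ 2 ∂μ := by
        rw [integral_finsetSum _ fun i _ => ((hg i).integrable_norm_pow two_ne_zero).const_mul _]
        simp only [integral_const_mul]

end MeasureTheory

theorem stmt13_general (m : ℕ)
    (ρ : Fin m → EuclideanSpace ℝ (Fin 3) → ℝ) (c : Fin m → ℝ)
    (hc : ∀ j, 0 < c j) (hρ0 : ∀ j x, 0 ≤ ρ j x)
    (hdiff : ∀ j, Differentiable ℝ (fun x => Real.sqrt (ρ j x)))
    (hL2 : ∀ j, MemLp (fun x => Real.sqrt (ρ j x)) 2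
      (volume : Measure (EuclideanSpace ℝ (Fin 3))))
    (hG : ∀ j, MemLp (fun x => fderiv ℝ (fun y => Real.sqrt (ρ j y)) x) 2
      (volume : Measure (EuclideanSpace ℝ (Fin 3)))) :
    MemLp (fun x => Real.sqrt (∑ j, c j * ρ j x)) 2
      (volume : Measure (EuclideanSpace ℝ (Fin 3))) ∧
    MemLp (fun x => fderiv ℝ (fun y => Real.sqrt (∑ j, c j * ρ j y)) x) 2
      (volume : Measure (EuclideanSpace ℝ (Fin 3))) ∧
    ∫ x : EuclideanSpace ℝ (Fin 3),
        ‖fderiv ℝ (fun y => Real.sqrt (∑ j, c j * ρ j y)) x‖ ^ 2 ≤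
      ∑ j, c j * ∫ x : EuclideanSpace ℝ (Fin 3),
        ‖fderiv ℝ (fun y => Real.sqrt (ρ j y)) x‖ ^ 2 := by
  have hρ : ∀ x, ∑ j, c j * ρ j x = ∑ j, c j * √(ρ j x) ^ 2 := fun x => by
    simp only [Real.sq_sqrt (hρ0 _ x)]
  simp only [hρ]
  have hvalue : ∀ x, ‖√(∑ j, c j * √(ρ j x) ^ 2)‖ ^ 2 = ∑ j, c j * ‖√(ρ j x)‖ ^ 2 := fun x => by
    simp only [Real.norm_eq_abs, sq_abs]
    exact Real.sq_sqrt (sum_nonneg fun j _ => mul_nonneg (hc j).le (sq_nonneg _))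
  have hgrad : ∀ x, ‖fderiv ℝ (fun y => √(∑ j, c j * √(ρ j y) ^ 2)) x‖ ^ 2 ≤
      ∑ j, c j * ‖fderiv ℝ (fun y => √(ρ j y)) x‖ ^ 2 := fun x =>
    sq_norm_fderiv_sqrt_sum_mul_sq_le (fun j => (hc j).le) fun j => (hdiff j).differentiableAt
  have hcont : Continuous fun x => √(∑ j, c j * √(ρ j x) ^ 2) :=
    (continuous_finsetSum _ fun j _ => continuous_const.mul ((hdiff j).continuous.pow 2)).sqrt
  exact ⟨MemLp.of_sq_norm_le_sum hcont.aestronglyMeasurable hL2 (.of_forall fun x => (hvalue x).le),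
    MemLp.of_sq_norm_le_sum (measurable_fderiv ℝ _).aestronglyMeasurable hG (.of_forall hgrad),
    integral_sq_norm_le_sum hG (.of_forall hgrad)⟩

/-- Convexity of the Fisher information: if `ρ = ∑ c_j ρ_j` with `c_j > 0` and each
`√ρ_j ∈ H¹(ℝ³)`, then `√ρ ∈ H¹(ℝ³)` and `∫ |∇√ρ|² ≤ ∑ c_j ∫ |∇√ρ_j|²`. -/
theorem stmt13 (m : ℕ) (hm : 1 ≤ m)
    (ρ : Fin m → EuclideanSpace ℝ (Fin 3) → ℝ) (c : Fin m → ℝ)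
    (hc : ∀ j, 0 < c j) (hρ0 : ∀ j x, 0 ≤ ρ j x)
    (hdiff : ∀ j, Differentiable ℝ (fun x => Real.sqrt (ρ j x)))
    (hL2 : ∀ j, MemLp (fun x => Real.sqrt (ρ j x)) 2
      (volume : Measure (EuclideanSpace ℝ (Fin 3))))
    (hG : ∀ j, MemLp (fun x => fderiv ℝ (fun y => Real.sqrt (ρ j y)) x) 2
      (volume : Measure (EuclideanSpace ℝ (Fin 3)))) :
    MemLp (fun x => Real.sqrt (∑ j, c j * ρ j x)) 2
      (volume : Measure (EuclideanSpace ℝ (Fin 3))) ∧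
    MemLp (fun x => fderiv ℝ (fun y => Real.sqrt (∑ j, c j * ρ j y)) x) 2
      (volume : Measure (EuclideanSpace ℝ (Fin 3))) ∧
    ∫ x : EuclideanSpace ℝ (Fin 3),
        ‖fderiv ℝ (fun y => Real.sqrt (∑ j, c j * ρ j y)) x‖ ^ 2 ≤
      ∑ j, c j * ∫ x : EuclideanSpace ℝ (Fin 3),
        ‖fderiv ℝ (fun y => Real.sqrt (ρ j y)) x‖ ^ 2 :=
  stmt13_general m ρ c hc hρ0 hdiff hL2 hG
end

section
/- Let Q ⊂ ℝ³ be a cube, u ∈ H¹(Q) nonnegative, ρ = u², and let S̃ > 0 be a Poincaré–Sobolev constant such that ∫_Q |∇u|² ≥ S̃ ‖u − |Q|^{−1}∫_Q u‖_{L⁶(Q)}² for all cubes (independent of size and location by scaling). Then ∫_Q |∇√ρ|² dx ≥ (S̃/2)·(∫_Q ρ^{5/3})/(∫_Q ρ)^{2/3} − S̃·|Q|^{−2/3}·∫_Q ρ. -/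
open MeasureTheory

/-- The open cube of side `L` with lower corner `a` in `ℝ³`. -/
def cube (a : EuclideanSpace ℝ (Fin 3)) (L : ℝ) : Set (EuclideanSpace ℝ (Fin 3)) :=
  {x | ∀ i, a i < x i ∧ x i < a i + L}

/-! With `ρ = u²` and `m` the mean of `u` over `Q`, Hölder's inequality gives
`∫ ρ^{5/3} ≤ ‖u‖₆² (∫ ρ)^{2/3}`. Minkowski's inequality in `L⁶`, squared with
`(x + y)² ≤ 2x² + 2y²`, gives `‖u‖₆² ≤ 2 ‖u - m‖₆² + 2 m² |Q|^{1/3}`. The first term is bounded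
by the Poincaré–Sobolev inequality, the second by Jensen's `m² ≤ |Q|⁻¹ ∫ ρ`. -/

section Interpolation

variable {α : Type*} [MeasurableSpace α] {μ : Measure α} {f : α → ℝ}

theorem integral_rpow_five_thirds_le {ρ : α → ℝ} (hρ : 0 ≤ᵐ[μ] ρ) (hρ₁ : Integrable ρ μ)
    (hρ₃ : MemLp ρ 3 μ) :
    ∫ x, ρ x ^ (5 / 3 : ℝ) ∂μ ≤
      (∫ x, ρ x ^ (3 : ℝ) ∂μ) ^ (1 / 3 : ℝ) * (∫ x, ρ x ∂μ) ^ (2 / 3 : ℝ) := by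
  have hg : MemLp (fun x => ‖ρ x‖ ^ (2 / 3 : ℝ)) (ENNReal.ofReal (3 / 2)) μ := by
    have := (memLp_one_iff_integrable.2 hρ₁).norm_rpow_div (ENNReal.ofReal (2 / 3))
    convert this using 2 <;> norm_num [ENNReal.div_eq_inv_mul, ← ENNReal.ofReal_inv_of_pos]
  have hpq : Real.HolderConjugate 3 (3 / 2) := Real.holderConjugate_iff.2 ⟨by norm_num, by norm_num⟩
  have hHolder := integral_mul_le_Lp_mul_Lq_of_nonneg hpq hρ (.of_forall fun _ => by positivity)
    (by simpa using hρ₃) hg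
  have hsplit : ∫ x, ρ x ^ (5 / 3 : ℝ) ∂μ = ∫ x, ρ x * ‖ρ x‖ ^ (2 / 3 : ℝ) ∂μ := by
    refine integral_congr_ae ?_
    filter_upwards [hρ] with x hx
    rw [Real.norm_of_nonneg hx, ← Real.rpow_one_add' hx (by norm_num)]
    norm_num
  have hmass : ∫ x, (‖ρ x‖ ^ (2 / 3 : ℝ)) ^ (3 / 2 : ℝ) ∂μ = ∫ x, ρ x ∂μ := by
    refine integral_congr_ae ?_
    filter_upwards [hρ] with x hx
    rw [Real.norm_of_nonneg hx, ← Real.rpow_mul hx]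
    norm_num
  rw [hsplit]
  refine hHolder.trans_eq ?_
  rw [hmass]
  norm_num

theorem sq_lpNorm_six (hf : AEStronglyMeasurable f μ) :
    lpNorm f 6 μ ^ 2 = (∫ x, |f x| ^ 6 ∂μ) ^ (1 / 3 : ℝ) := by
  have h6 : (6 : ENNReal).toReal = 6 := by norm_num
  rw [lpNorm_eq_integral_norm_rpow_toReal (by norm_num) (by norm_num) hf, h6,
    ← Real.rpow_mul_natCast (integral_nonneg fun _ => by positivity)]
  norm_num

variable [IsFiniteMeasure μ]

theorem sq_average_le_average_sq [NeZero μ] (hf : MemLp f 2 μ) :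
    (⨍ x, f x ∂μ) ^ 2 ≤ ⨍ x, f x ^ 2 ∂μ :=
  (Even.convexOn_pow even_two).map_average_le (continuous_pow 2).continuousOn isClosed_univ
    (.of_forall fun _ => trivial) (hf.integrable one_le_two) hf.integrable_sq

theorem integral_abs_pow_six_rpow_le_sub_const (hf : MemLp f 6 μ) (c : ℝ) :
    (∫ x, |f x| ^ 6 ∂μ) ^ (1 / 3 : ℝ) ≤
      2 * (∫ x, |f x - c| ^ 6 ∂μ) ^ (1 / 3 : ℝ) + 2 * (c ^ 2 * μ.real Set.univ ^ (1 / 3 : ℝ)) := by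
  have hMinkowski : lpNorm f 6 μ ≤
      |c| * μ.real Set.univ ^ (1 / 6 : ℝ) + lpNorm (fun x => f x - c) 6 μ := by
    have h := lpNorm_le_lpNorm_add_lpNorm_sub' (f := f) (memLp_const c) (p := 6) (μ := μ)
      (by norm_num)
    rw [lpNorm_const' (by norm_num) (by norm_num)] at h
    simpa [Pi.sub_def] using h
  have hconst : (|c| * μ.real Set.univ ^ (1 / 6 : ℝ)) ^ 2 =
      c ^ 2 * μ.real Set.univ ^ (1 / 3 : ℝ) := by
    rw [mul_pow, sq_abs, ← Real.rpow_mul_natCast measureReal_nonneg]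
    norm_num
  rw [← sq_lpNorm_six hf.aestronglyMeasurable,
    ← sq_lpNorm_six (f := fun x => f x - c) (hf.sub (memLp_const c)).aestronglyMeasurable,
    ← hconst]
  calc lpNorm f 6 μ ^ 2
      ≤ (|c| * μ.real Set.univ ^ (1 / 6 : ℝ) + lpNorm (fun x => f x - c) 6 μ) ^ 2 :=
        pow_le_pow_left₀ lpNorm_nonneg hMinkowski 2
    _ ≤ 2 * ((|c| * μ.real Set.univ ^ (1 / 6 : ℝ)) ^ 2 + lpNorm (fun x => f x - c) 6 μ ^ 2) :=
        add_sq_le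
    _ = _ := by ring

theorem integral_rpow_five_thirds_div_le [NeZero μ] (hf : MemLp f 6 μ) :
    (∫ x, (f x ^ 2) ^ (5 / 3 : ℝ) ∂μ) / (∫ x, f x ^ 2 ∂μ) ^ (2 / 3 : ℝ) ≤
      2 * (∫ x, |f x - ⨍ y, f y ∂μ| ^ 6 ∂μ) ^ (1 / 3 : ℝ) +
        2 * (μ.real Set.univ ^ (-(2 : ℝ) / 3) * ∫ x, f x ^ 2 ∂μ) := by
  have hf₂ : MemLp f 2 μ := hf.mono_exponent (by norm_num)
  have hρ₃ : MemLp (fun x => f x ^ 2) 3 μ := by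
    convert hf.norm_rpow_div 2 using 2 with x
    · rw [Real.norm_eq_abs]; norm_num
    · rw [ENNReal.eq_div_iff] <;> norm_num
  have hHolder := integral_rpow_five_thirds_le (.of_forall fun x => sq_nonneg (f x))
    hf₂.integrable_sq hρ₃
  have hcube : ∫ x, (f x ^ 2) ^ (3 : ℝ) ∂μ = ∫ x, |f x| ^ 6 ∂μ := by
    congr 1 with x
    rw [Real.rpow_ofNat, ← sq_abs, ← pow_mul]
  have hV := measureReal_univ_pos (μ := μ)
  have hmean : (⨍ x, f x ∂μ) ^ 2 * μ.real Set.univ ^ (1 / 3 : ℝ) ≤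
      μ.real Set.univ ^ (-(2 : ℝ) / 3) * ∫ x, f x ^ 2 ∂μ := by
    have hJensen : (⨍ x, f x ∂μ) ^ 2 ≤ (μ.real Set.univ)⁻¹ * ∫ x, f x ^ 2 ∂μ :=
      (sq_average_le_average_sq hf₂).trans_eq (by rw [average_eq, smul_eq_mul])
    calc (⨍ x, f x ∂μ) ^ 2 * μ.real Set.univ ^ (1 / 3 : ℝ)
        ≤ (μ.real Set.univ)⁻¹ * (∫ x, f x ^ 2 ∂μ) * μ.real Set.univ ^ (1 / 3 : ℝ) := by
          gcongr
      _ = μ.real Set.univ ^ (-(2 : ℝ) / 3) * ∫ x, f x ^ 2 ∂μ := by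
        rw [← Real.rpow_neg_one, mul_right_comm, ← Real.rpow_add hV]
        norm_num
  calc (∫ x, (f x ^ 2) ^ (5 / 3 : ℝ) ∂μ) / (∫ x, f x ^ 2 ∂μ) ^ (2 / 3 : ℝ)
      ≤ (∫ x, |f x| ^ 6 ∂μ) ^ (1 / 3 : ℝ) :=
        div_le_of_le_mul₀ (by positivity) (by positivity) (hcube ▸ hHolder)
    _ ≤ _ := integral_abs_pow_six_rpow_le_sub_const hf _
    _ ≤ _ := by gcongr

end Interpolation

section Cube

lemma cube_eq_preimage_pi (a : EuclideanSpace ℝ (Fin 3)) (L : ℝ) :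
    cube a L = WithLp.ofLp ⁻¹' Set.univ.pi fun i => Set.Ioo (a i) (a i + L) := by
  ext x; simp [cube]

lemma measurableSet_cube (a : EuclideanSpace ℝ (Fin 3)) (L : ℝ) : MeasurableSet (cube a L) := by
  rw [cube_eq_preimage_pi]
  exact (MeasurableSet.univ_pi fun _ => measurableSet_Ioo).preimage (by fun_prop)

lemma volume_cube (a : EuclideanSpace ℝ (Fin 3)) (L : ℝ) :
    volume (cube a L) = ENNReal.ofReal L ^ 3 := by
  rw [cube_eq_preimage_pi, (PiLp.volume_preserving_ofLp (Fin 3)).measure_preimage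
    (MeasurableSet.univ_pi fun _ => measurableSet_Ioo).nullMeasurableSet, Real.volume_pi_Ioo]
  simp

end Cube

theorem stmt18_general (S : ℝ) (hS0 : 0 < S)
    (hPS : ∀ (b : EuclideanSpace ℝ (Fin 3)) (ℓ : ℝ), 0 < ℓ →
      ∀ v : EuclideanSpace ℝ (Fin 3) → ℝ, DifferentiableOn ℝ v (cube b ℓ) →
      IntegrableOn (fun x => v x ^ 2 + ‖fderiv ℝ v x‖ ^ 2 + |v x| ^ 6) (cube b ℓ) →
      ∫ x in cube b ℓ, ‖fderiv ℝ v x‖ ^ 2 ≥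
        S * (∫ x in cube b ℓ,
          |v x - (volume (cube b ℓ)).toReal⁻¹ * ∫ y in cube b ℓ, v y| ^ 6) ^ ((1:ℝ)/3))
    (a : EuclideanSpace ℝ (Fin 3)) (L : ℝ) (hL : 0 < L)
    (u : EuclideanSpace ℝ (Fin 3) → ℝ)
    (hdiff : DifferentiableOn ℝ u (cube a L))
    (hH1 : IntegrableOn (fun x => u x ^ 2 + ‖fderiv ℝ u x‖ ^ 2 + |u x| ^ 6) (cube a L)) :
    ∫ x in cube a L, ‖fderiv ℝ u x‖ ^ 2 ≥
      S / 2 * (∫ x in cube a L, (u x ^ 2) ^ ((5:ℝ)/3)) /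
          (∫ x in cube a L, u x ^ 2) ^ ((2:ℝ)/3) -
        S * (volume (cube a L)).toReal ^ (-(2:ℝ)/3) * ∫ x in cube a L, u x ^ 2 := by
  have hvol : volume (cube a L) = ENNReal.ofReal L ^ 3 := volume_cube a L
  have : IsFiniteMeasure (volume.restrict (cube a L)) :=
    isFiniteMeasure_restrict.2 (by simp [hvol])
  have : NeZero (volume.restrict (cube a L)) := ⟨by simp [Measure.restrict_eq_zero, hvol, hL]⟩
  have hmeas : AEStronglyMeasurable u (volume.restrict (cube a L)) :=
    hdiff.continuousOn.aestronglyMeasurable (measurableSet_cube a L)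
  have hL6 : MemLp u 6 (volume.restrict (cube a L)) := by
    refine (integrable_norm_rpow_iff hmeas (by norm_num) (by norm_num)).1 <|
      hH1.mono' (hmeas.norm.aemeasurable.pow_const _).aestronglyMeasurable (.of_forall fun x => ?_)
    simp only [Real.norm_eq_abs, ENNReal.toReal_ofNat, Real.rpow_ofNat, norm_pow, abs_abs,
      le_add_iff_nonneg_left]
    positivity
  have hmean : ⨍ x in cube a L, u x = (volume (cube a L)).toReal⁻¹ * ∫ y in cube a L, u y := by
    rw [average_eq, measureReal_restrict_apply_univ, smul_eq_mul, measureReal_def]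
  have hbound := integral_rpow_five_thirds_div_le hL6
  rw [hmean, measureReal_restrict_apply_univ, measureReal_def] at hbound
  have hSobolev := hPS a L hL u hdiff hH1
  rw [mul_div_assoc]
  linarith [mul_le_mul_of_nonneg_left hbound (half_pos hS0).le]

/-- Poincaré–Sobolev on a cube implies the local kinetic-energy lower bound
`∫_Q |∇√ρ|² ≥ (S̃/2) (∫_Q ρ^{5/3})/(∫_Q ρ)^{2/3} − S̃ |Q|^{-2/3} ∫_Q ρ`
for `ρ = u²`, `u ≥ 0`. -/
theorem stmt18 (S : ℝ) (hS0 : 0 < S)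
    (hPS : ∀ (b : EuclideanSpace ℝ (Fin 3)) (ℓ : ℝ), 0 < ℓ →
      ∀ v : EuclideanSpace ℝ (Fin 3) → ℝ, DifferentiableOn ℝ v (cube b ℓ) →
      IntegrableOn (fun x => v x ^ 2 + ‖fderiv ℝ v x‖ ^ 2 + |v x| ^ 6) (cube b ℓ) →
      ∫ x in cube b ℓ, ‖fderiv ℝ v x‖ ^ 2 ≥
        S * (∫ x in cube b ℓ,
          |v x - (volume (cube b ℓ)).toReal⁻¹ * ∫ y in cube b ℓ, v y| ^ 6) ^ ((1:ℝ)/3))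
    (a : EuclideanSpace ℝ (Fin 3)) (L : ℝ) (hL : 0 < L)
    (u : EuclideanSpace ℝ (Fin 3) → ℝ) (hu0 : ∀ x ∈ cube a L, 0 ≤ u x)
    (hdiff : DifferentiableOn ℝ u (cube a L))
    (hH1 : IntegrableOn (fun x => u x ^ 2 + ‖fderiv ℝ u x‖ ^ 2 + |u x| ^ 6) (cube a L)) :
    ∫ x in cube a L, ‖fderiv ℝ u x‖ ^ 2 ≥
      S / 2 * (∫ x in cube a L, (u x ^ 2) ^ ((5:ℝ)/3)) /
          (∫ x in cube a L, u x ^ 2) ^ ((2:ℝ)/3) -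
        S * (volume (cube a L)).toReal ^ (-(2:ℝ)/3) * ∫ x in cube a L, u x ^ 2 :=
  stmt18_general S hS0 hPS a L hL u hdiff hH1
end
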